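/- arXiv:math/0112083 — 2 statements merged into one kernel-verified Lean document; each statement's English description precedes it below -/
import Mathlib

section
/- Let σ > 0 and let f : ℝ → ℝ be a Schwartz function. Then the regularized Shannon kernel acts as an approximation of the Dirac delta in the limit of vanishing grid spacing: lim_{Δ → 0⁺} (1/Δ) ∫_ℝ [sin(πx/Δ)/(πx/Δ)] · e^{-x²/(2σ²)} · f(x) dx = f(0), where the factor sin(πx/Δ)/(πx/Δ) is understood to equal 1 at x = 0. -/
open Real Filter MeasureTheory
open scoped FourierTransform Topology

lemma poly_bound (p : Polynomial ℝ) : ∃ C : ℝ, 0 ≤ C ∧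
    ∀ x : ℝ, |p.eval x| ≤ C * (1 + |x|) ^ p.natDegree := by
  refine ⟨∑ i ∈ Finset.range (p.natDegree + 1), |p.coeff i|,
    Finset.sum_nonneg fun _ _ => abs_nonneg _, fun x => ?_⟩
  rw [Polynomial.eval_eq_sum_range]
  calc |∑ i ∈ Finset.range (p.natDegree + 1), p.coeff i * x ^ i|
      ≤ ∑ i ∈ Finset.range (p.natDegree + 1), |p.coeff i * x ^ i| :=
        Finset.abs_sum_le_sum_abs _ _
    _ ≤ ∑ i ∈ Finset.range (p.natDegree + 1), |p.coeff i| * (1 + |x|) ^ p.natDegree := by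
        refine Finset.sum_le_sum fun i hi => ?_
        rw [abs_mul]
        refine mul_le_mul_of_nonneg_left ?_ (abs_nonneg _)
        rw [abs_pow]
        calc |x| ^ i ≤ (1 + |x|) ^ i :=
              pow_le_pow_left₀ (abs_nonneg x) (by linarith [abs_nonneg x]) i
          _ ≤ (1 + |x|) ^ p.natDegree :=
              pow_le_pow_right₀ (by linarith [abs_nonneg x])
                (Nat.lt_succ_iff.mp (Finset.mem_range.mp hi))
    _ = _ := (Finset.sum_mul _ _ _).symm

lemma gauss_hasDerivAt (a x : ℝ) :
    HasDerivAt (fun x : ℝ => Real.exp (-a * x ^ 2)) (Real.exp (-a * x ^ 2) * (-a * (2 * x))) x := by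
  have h : HasDerivAt (fun x : ℝ => -a * x ^ 2) (-a * (2 * x)) x := by
    simpa using (hasDerivAt_pow 2 x).const_mul (-a)
  exact h.exp

lemma gauss_iteratedDeriv (a : ℝ) (n : ℕ) : ∃ p : Polynomial ℝ,
    iteratedDeriv n (fun x : ℝ => Real.exp (-a * x ^ 2)) =
      fun x => p.eval x * Real.exp (-a * x ^ 2) := by
  induction n with
  | zero => exact ⟨1, by simp [iteratedDeriv_zero]⟩
  | succ n ih =>
    obtain ⟨p, hp⟩ := ih
    refine ⟨p.derivative + Polynomial.C (-2 * a) * (Polynomial.X * p), ?_⟩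
    rw [iteratedDeriv_succ, hp]
    funext x
    have h1 : HasDerivAt (fun x => p.eval x * Real.exp (-a * x ^ 2))
        (p.derivative.eval x * Real.exp (-a * x ^ 2)
          + p.eval x * (Real.exp (-a * x ^ 2) * (-a * (2 * x)))) x :=
      (p.hasDerivAt x).mul (gauss_hasDerivAt a x)
    rw [h1.deriv]
    simp only [Polynomial.eval_add, Polynomial.eval_mul, Polynomial.eval_C, Polynomial.eval_X]
    ring

lemma gauss_temperate {a : ℝ} (ha : 0 ≤ a) :
    Function.HasTemperateGrowth (fun x : ℝ => Real.exp (-a * x ^ 2)) := by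
  refine ⟨Real.contDiff_exp.comp (contDiff_const.mul (contDiff_id.pow 2)), fun n => ?_⟩
  obtain ⟨p, hp⟩ := gauss_iteratedDeriv a n
  obtain ⟨C, hC0, hC⟩ := poly_bound p
  refine ⟨p.natDegree, C, fun x => ?_⟩
  rw [norm_iteratedFDeriv_eq_norm_iteratedDeriv, hp]
  have he : Real.exp (-a * x ^ 2) ≤ 1 := by
    rw [Real.exp_le_one_iff]
    exact mul_nonpos_of_nonpos_of_nonneg (neg_nonpos.mpr ha) (sq_nonneg x)
  calc ‖p.eval x * Real.exp (-a * x ^ 2)‖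
      = |p.eval x| * Real.exp (-a * x ^ 2) := by
        rw [Real.norm_eq_abs, abs_mul, abs_of_pos (Real.exp_pos _)]
    _ ≤ |p.eval x| * 1 := by gcongr
    _ ≤ C * (1 + ‖x‖) ^ p.natDegree := by rw [mul_one, Real.norm_eq_abs]; exact hC x

open Complex in
lemma fourier_re_eq (g : ℝ → ℝ) (hgi : Integrable g) (s : ℝ) :
    (𝓕 (fun x : ℝ => ((g x : ℝ) : ℂ)) s).re = ∫ x : ℝ, Real.cos (2 * π * s * x) * g x := by
  rw [Real.fourier_real_eq]
  have hint : Integrable (fun v : ℝ => 𝐞 (-(v * s)) • ((g v : ℝ) : ℂ)) := by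
    simpa [RCLike.inner_apply, mul_comm] using (Real.fourierIntegral_convergent_iff (f := fun x : ℝ => ((g x : ℝ) : ℂ)) s).2
      hgi.ofReal
  rw [← RCLike.re_to_complex, ← integral_re hint]
  refine integral_congr_ae (Eventually.of_forall fun v => ?_)
  simp only [Circle.smul_def, Real.fourierChar_apply, RCLike.re_to_complex]
  rw [show (2 * π * -(v * s)) = -(2 * π * s * v) by ring]
  rw [smul_eq_mul, Complex.mul_re, Complex.exp_ofReal_mul_I_re, Complex.exp_ofReal_mul_I_im]
  simp [Real.cos_neg]

lemma key_interval (g : ℝ → ℝ) (hgi : Integrable g) (hgc : Continuous g)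
    {Δ : ℝ} (hΔ : 0 < Δ) :
    (1 / Δ) * ∫ x : ℝ, (if x = 0 then 1 else Real.sin (π * x / Δ) / (π * x / Δ)) * g x
      = ∫ s in (-(1 / (2 * Δ)))..(1 / (2 * Δ)), (𝓕 (fun x : ℝ => ((g x : ℝ) : ℂ)) s).re := by
  set c : ℝ := π / Δ with hc
  have hcpos : 0 < c := div_pos pi_pos hΔ
  set R : ℝ → ℝ := fun s => (𝓕 (fun x : ℝ => ((g x : ℝ) : ℂ)) s).re with hRdef
  have hRcos : ∀ s, R s = ∫ x : ℝ, Real.cos (2 * π * s * x) * g x :=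
    fun s => fourier_re_eq g hgi s
  have hRcont : Continuous R := by
    have : Continuous (𝓕 (fun x : ℝ => ((g x : ℝ) : ℂ))) :=
      VectorFourier.fourierIntegral_continuous Real.continuous_fourierChar
        (by exact continuous_inner) hgi.ofReal
    exact Complex.continuous_re.comp this
  -- Step 1
  have step1 : (1 / Δ) * ∫ x : ℝ,
        (if x = 0 then 1 else Real.sin (π * x / Δ) / (π * x / Δ)) * g x
      = (1 / π) * ∫ x : ℝ, ∫ t in (0:ℝ)..c, Real.cos (t * x) * g x := by
    rw [← integral_const_mul, ← integral_const_mul]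
    refine integral_congr_ae ?_
    have h0 : ∀ᵐ x : ℝ, x ≠ 0 := by
      refine ae_iff.2 ?_
      simp [Set.setOf_eq_eq_singleton, measure_singleton]
    filter_upwards [h0] with x hx
    have hcos : ∫ t in (0:ℝ)..c, Real.cos (t * x) = Real.sin (c * x) / x := by
      rw [intervalIntegral.integral_comp_mul_right Real.cos hx]
      simp [integral_cos, smul_eq_mul]
      ring
    rw [intervalIntegral.integral_mul_const, hcos, if_neg hx,
      show π * x / Δ = c * x by rw [hc]; ring]
    have hcx : c * x ≠ 0 := mul_ne_zero hcpos.ne' hx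
    have hΔ0 : Δ ≠ 0 := ne_of_gt hΔ
    show 1 / Δ * (Real.sin (c * x) / (c * x) * g x) = 1 / π * (Real.sin (c * x) / x * g x)
    have hd : Δ * (c * x) = π * x := by
      rw [hc]; field_simp
    calc 1 / Δ * (Real.sin (c * x) / (c * x) * g x)
        = Real.sin (c * x) * g x / (Δ * (c * x)) := by ring
      _ = Real.sin (c * x) * g x / (π * x) := by rw [hd]
      _ = 1 / π * (Real.sin (c * x) / x * g x) := by
          rw [div_mul_eq_mul_div, mul_comm π x, ← div_div]
          ring
  -- Step 2 : Fubini
  haveI : IsFiniteMeasure (volume.restrict (Set.Ioc (0:ℝ) c)) :=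
    ⟨by rw [Measure.restrict_apply_univ]; exact measure_Ioc_lt_top⟩
  have hF : Integrable (Function.uncurry fun (x t : ℝ) => Real.cos (t * x) * g x)
      (volume.prod (volume.restrict (Set.Ioc 0 c))) := by
    have hmeas : AEStronglyMeasurable
        (Function.uncurry fun (x t : ℝ) => Real.cos (t * x) * g x)
        (volume.prod (volume.restrict (Set.Ioc 0 c))) :=
      ((Real.continuous_cos.comp (continuous_snd.mul continuous_fst)).mul
        (hgc.comp continuous_fst)).aestronglyMeasurable
    have hbound : Integrable (fun p : ℝ × ℝ => ‖g p.1‖ * 1)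
        (volume.prod (volume.restrict (Set.Ioc 0 c))) :=
      hgi.norm.mul_prod (integrable_const 1)
    refine hbound.mono' hmeas (Eventually.of_forall fun p => ?_)
    simp only [Function.uncurry, norm_mul, mul_one]
    calc ‖Real.cos (p.2 * p.1)‖ * ‖g p.1‖ ≤ 1 * ‖g p.1‖ := by
          gcongr; exact Real.abs_cos_le_one _
      _ = ‖g p.1‖ := one_mul _
  have step2 : ∫ x : ℝ, ∫ t in (0:ℝ)..c, Real.cos (t * x) * g x
      = ∫ t in (0:ℝ)..c, ∫ x : ℝ, Real.cos (t * x) * g x := by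
    simp_rw [intervalIntegral.integral_of_le hcpos.le]
    exact integral_integral_swap hF
  -- Step 3 : inner integral is R (t / (2π))
  have step3 : ∀ t : ℝ, (∫ x : ℝ, Real.cos (t * x) * g x) = R (t / (2 * π)) := by
    intro t
    rw [hRcos]
    refine integral_congr_ae (Eventually.of_forall fun x => ?_)
    show Real.cos (t * x) * g x = Real.cos (2 * π * (t / (2 * π)) * x) * g x
    rw [show 2 * π * (t / (2 * π)) * x = t * x by field_simp]
  -- Step 4 : change of variables
  have step4 : (∫ t in (0:ℝ)..c, R (t / (2 * π)))
      = (2 * π) * ∫ s in (0:ℝ)..(c / (2 * π)), R s := by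
    rw [intervalIntegral.integral_comp_div R (by positivity : (2 * π : ℝ) ≠ 0)]
    simp [smul_eq_mul]
  -- Step 5 : evenness
  have Reven : ∀ s, R (-s) = R s := by
    intro s
    rw [hRcos, hRcos]
    refine integral_congr_ae (Eventually.of_forall fun x => ?_)
    show Real.cos (2 * π * -s * x) * g x = Real.cos (2 * π * s * x) * g x
    rw [show 2 * π * -s * x = -(2 * π * s * x) by ring, Real.cos_neg]
  have step5 : 2 * (∫ s in (0:ℝ)..(c / (2 * π)), R s)
      = ∫ s in (-(c / (2 * π)))..(c / (2 * π)), R s := by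
    have hneg : (∫ s in (-(c / (2 * π)))..(0:ℝ), R s)
        = ∫ s in (0:ℝ)..(c / (2 * π)), R s := by
      have h := intervalIntegral.integral_comp_neg (a := (0:ℝ)) (b := c / (2 * π)) R
      rw [neg_zero] at h
      rw [← h]
      exact intervalIntegral.integral_congr fun x _ => Reven x
    have h1 : IntervalIntegrable R volume (-(c / (2 * π))) 0 :=
      hRcont.intervalIntegrable _ _
    have h2 : IntervalIntegrable R volume 0 (c / (2 * π)) :=
      hRcont.intervalIntegrable _ _
    calc 2 * (∫ s in (0:ℝ)..(c / (2 * π)), R s)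
        = (∫ s in (-(c / (2 * π)))..(0:ℝ), R s)
          + ∫ s in (0:ℝ)..(c / (2 * π)), R s := by rw [hneg]; ring
      _ = _ := intervalIntegral.integral_add_adjacent_intervals h1 h2
  have hM : c / (2 * π) = 1 / (2 * Δ) := by
    rw [hc]
    field_simp
  calc (1 / Δ) * ∫ x : ℝ, (if x = 0 then 1 else Real.sin (π * x / Δ) / (π * x / Δ)) * g x
      = (1 / π) * ∫ x : ℝ, ∫ t in (0:ℝ)..c, Real.cos (t * x) * g x := step1
    _ = (1 / π) * ∫ t in (0:ℝ)..c, ∫ x : ℝ, Real.cos (t * x) * g x := by rw [step2]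
    _ = (1 / π) * ∫ t in (0:ℝ)..c, R (t / (2 * π)) := by
        rw [intervalIntegral.integral_congr fun t _ => step3 t]
    _ = (1 / π) * ((2 * π) * ∫ s in (0:ℝ)..(c / (2 * π)), R s) := by rw [step4]
    _ = 2 * ∫ s in (0:ℝ)..(c / (2 * π)), R s := by
        field_simp
    _ = ∫ s in (-(c / (2 * π)))..(c / (2 * π)), R s := step5
    _ = _ := by rw [hM]

/-- The regularized Shannon kernel, normalized by the grid spacing, acts as an
approximation of the Dirac delta distribution as the grid spacing Δ → 0⁺. -/
theorem regularized_shannon_kernel_delta (σ : ℝ) (hσ : 0 < σ)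
    (f : SchwartzMap ℝ ℝ) :
    Filter.Tendsto
      (fun Δ : ℝ => (1 / Δ) *
        ∫ x : ℝ,
          (if x = 0 then 1 else Real.sin (π * x / Δ) / (π * x / Δ))
            * Real.exp (-x ^ 2 / (2 * σ ^ 2)) * f x)
      (nhdsWithin 0 (Set.Ioi 0)) (nhds (f 0)) := by
  have ha : (0:ℝ) ≤ (2 * σ ^ 2)⁻¹ := by positivity
  have hG : Function.HasTemperateGrowth (fun x : ℝ => Real.exp (-x ^ 2 / (2 * σ ^ 2))) := by
    have heq : (fun x : ℝ => Real.exp (-x ^ 2 / (2 * σ ^ 2)))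
        = fun x : ℝ => Real.exp (-(2 * σ ^ 2)⁻¹ * x ^ 2) := by
      funext x; congr 1; ring
    rw [heq]; exact gauss_temperate ha
  set B : ℝ →L[ℝ] ℝ →L[ℝ] ℂ :=
    (ContinuousLinearMap.compL ℝ ℝ ℝ ℂ Complex.ofRealCLM).comp
      (ContinuousLinearMap.mul ℝ ℝ) with hB
  set g : ℝ → ℝ := fun x => Real.exp (-x ^ 2 / (2 * σ ^ 2)) * f x with hgdef
  set gS : SchwartzMap ℝ ℂ := SchwartzMap.bilinLeftCLM B hG f with hgSdef
  have hco : ⇑gS = fun x : ℝ => ((g x : ℝ) : ℂ) := by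
    funext x
    show B (f x) (Real.exp (-x ^ 2 / (2 * σ ^ 2))) = _
    simp [hB, hgdef, mul_comm]
  have hgSint : Integrable (fun x : ℝ => ((g x : ℝ) : ℂ)) := by
    rw [← hco]; exact gS.integrable
  have hgint : Integrable g := by
    simpa using hgSint.re
  have hgcont : Continuous g := by
    apply Continuous.mul _ f.continuous
    exact Real.continuous_exp.comp (by fun_prop)
  have h𝓕 : Integrable (𝓕 (fun x : ℝ => ((g x : ℝ) : ℂ))) := by
    have h := (SchwartzMap.fourierTransformCLM ℂ gS).integrable (μ := volume)
    rwa [SchwartzMap.fourierTransformCLM_apply, SchwartzMap.fourier_coe, hco] at h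
  have hinv : (∫ s : ℝ, 𝓕 (fun x : ℝ => ((g x : ℝ) : ℂ)) s) = ((g 0 : ℝ) : ℂ) := by
    have h1 := Continuous.fourierInv_fourier_eq
      (Complex.continuous_ofReal.comp hgcont) hgSint h𝓕
    have h2 := congrFun h1 0
    rw [Real.fourierInv_eq] at h2
    simpa [Function.comp_def] using h2
  have hRint : Integrable (fun s : ℝ => (𝓕 (fun x : ℝ => ((g x : ℝ) : ℂ)) s).re) := by
    simpa using h𝓕.re
  have h0 : (∫ s : ℝ, (𝓕 (fun x : ℝ => ((g x : ℝ) : ℂ)) s).re) = f 0 := by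
    have h := integral_re (μ := (volume : Measure ℝ)) h𝓕
    rw [hinv] at h
    simpa [hgdef, RCLike.re_to_complex] using h
  have hlim : Tendsto (fun M : ℝ => ∫ s in (-M)..M,
      (𝓕 (fun x : ℝ => ((g x : ℝ) : ℂ)) s).re) atTop (𝓝 (f 0)) := by
    have h := intervalIntegral_tendsto_integral hRint tendsto_neg_atTop_atBot tendsto_id
    rw [h0] at h
    simpa using h
  have hMtend : Tendsto (fun Δ : ℝ => 1 / (2 * Δ)) (𝓝[>] (0:ℝ)) atTop := by
    have h2 : Tendsto (fun Δ : ℝ => Δ⁻¹) (𝓝[>] (0:ℝ)) atTop := tendsto_inv_nhdsGT_zero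
    have h3 := h2.const_mul_atTop (by norm_num : (0:ℝ) < 1/2)
    refine h3.congr fun Δ => ?_
    simp [one_div, mul_inv, mul_comm]
  refine Tendsto.congr' ?_ (hlim.comp hMtend)
  filter_upwards [self_mem_nhdsWithin] with Δ (hΔ : Δ ∈ Set.Ioi 0)
  have hkey := key_interval g hgint hgcont hΔ
  simp only [Function.comp]
  rw [← hkey]
  congr 1
  refine integral_congr_ae (Eventually.of_forall fun x => ?_)
  rw [hgdef]
  ring
end

section
/- Let σ > 0 and n ∈ ℕ, and define the Hermite DSC kernel δ_{σ,n}(x) = (1/(σ√(2π))) · e^{-x²/(2σ²)} · Σ_{k=0}^{n} (-1/4)^k (1/k!) H_{2k}(x/(√2 σ)), where H_m denotes the physicists' Hermite polynomials. Then its Fourier transform (frequency response) is, for every ω ∈ ℝ: ∫_ℝ δ_{σ,n}(x) e^{-iωx} dx = e^{-σ²ω²/2} · Σ_{k=0}^{n} (σ²ω²/2)^k / k!, i.e., the degree-n Taylor partial sum of e^{σ²ω²/2} multiplied by the Gaussian e^{-σ²ω²/2}. -/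
open Real MeasureTheory


lemma integrable_rexp_quad (c : ℝ) : Integrable fun x : ℝ ↦ Real.exp (-x^2 + c*x) := by
  have h := (integrable_cexp_quadratic' (b := -1) (by simp) (c : ℂ) 0).norm
  refine h.congr (Filter.Eventually.of_forall fun x ↦ ?_)
  simp only [Complex.norm_exp]
  congr 1
  simp [Complex.add_re, Complex.mul_re, ← Complex.ofReal_pow]

lemma integrable_pow_mul_cexp (j : ℕ) (a : ℂ) :
    Integrable fun x : ℝ ↦ (x : ℂ)^j * Complex.exp (-(x:ℂ)^2 + a*x) := by
  set r := a.re with hr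
  apply Integrable.mono'
      (g := fun x ↦ (j.factorial : ℝ) *
        (Real.exp (-x^2 + (r+1)*x) + Real.exp (-x^2 + (r-1)*x)))
  · exact ((integrable_rexp_quad (r+1)).add (integrable_rexp_quad (r-1))).const_mul _
  · apply Continuous.aestronglyMeasurable
    fun_prop
  · refine Filter.Eventually.of_forall fun x ↦ ?_
    have hre : (-(x:ℂ)^2 + a*x).re = -x^2 + r*x := by
      simp [Complex.add_re, Complex.mul_re, ← Complex.ofReal_pow, hr]
    rw [norm_mul, norm_pow]
    simp only [Complex.norm_exp, hre, Complex.norm_real, Real.norm_eq_abs]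
    have h1 : |x|^j ≤ (j.factorial : ℝ) * Real.exp |x| := by
      have := Real.pow_div_factorial_le_exp _ (abs_nonneg x) j
      have hf : (0:ℝ) < j.factorial := by positivity
      calc |x|^j = (|x|^j / j.factorial) * j.factorial := by field_simp
        _ ≤ Real.exp |x| * j.factorial := by
            apply mul_le_mul_of_nonneg_right this hf.le
        _ = (j.factorial : ℝ) * Real.exp |x| := by ring
    calc |x|^j * Real.exp (-x^2 + r*x)
        ≤ ((j.factorial : ℝ) * Real.exp |x|) * Real.exp (-x^2 + r*x) :=
          mul_le_mul_of_nonneg_right h1 (Real.exp_pos _).le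
      _ = (j.factorial : ℝ) * Real.exp (-x^2 + r*x + |x|) := by
          rw [mul_assoc, ← Real.exp_add]
          congr 2
          ring
      _ ≤ (j.factorial : ℝ) * (Real.exp (-x^2 + (r+1)*x) + Real.exp (-x^2 + (r-1)*x)) := by
          apply mul_le_mul_of_nonneg_left _ (by positivity)
          rcases le_or_gt 0 x with hx | hx
          · rw [abs_of_nonneg hx]
            have : -x^2 + r*x + x = -x^2 + (r+1)*x := by ring
            rw [this]
            exact le_add_of_nonneg_right (Real.exp_pos _).le
          · rw [abs_of_neg hx]
            have : -x^2 + r*x + -x = -x^2 + (r-1)*x := by ring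
            rw [this]
            exact le_add_of_nonneg_left (Real.exp_pos _).le

/-- The physicists' Hermite polynomials, as real functions:
`H 0 x = 1`, `H 1 x = 2x`, `H (m+2) x = 2x H (m+1) x - 2(m+1) H m x`. -/
noncomputable def physHermite : ℕ → ℝ → ℝ
  | 0 => fun _ => 1
  | 1 => fun x => 2 * x
  | (m + 2) => fun x => 2 * x * physHermite (m + 1) x - 2 * (m + 1) * physHermite m x

noncomputable def hermDeriv : ℕ → ℝ → ℝ
  | 0 => fun _ => 0
  | (m + 1) => fun x => 2 * (m + 1) * physHermite m x

lemma two_mul_physHermite (m : ℕ) (x : ℝ) :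
    2 * x * physHermite m x = physHermite (m + 1) x + hermDeriv m x := by
  cases m with
  | zero => simp [physHermite, hermDeriv]
  | succ m =>
    simp only [physHermite, hermDeriv]
    ring

lemma hermDeriv_succ (m : ℕ) (x : ℝ) :
    hermDeriv (m + 1) x = 2 * ((m + 1 : ℕ) : ℝ) * physHermite m x := by simp [hermDeriv]

lemma hasDerivAt_physHermite (m : ℕ) :
    ∀ x : ℝ, HasDerivAt (physHermite m) (hermDeriv m x) x := by
  induction m using Nat.twoStepInduction with
  | zero => intro x; simpa [physHermite, hermDeriv] using hasDerivAt_const x (1:ℝ)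
  | one =>
    intro x
    have h := (hasDerivAt_id x).const_mul (2:ℝ)
    have : HasDerivAt (physHermite 1) (2:ℝ) x := by
      simpa [physHermite] using h
    simpa [hermDeriv, physHermite] using this
  | more m ih1 ih2 =>
    intro x
    have h1 : HasDerivAt (fun x : ℝ ↦ 2 * x * physHermite (m+1) x)
        (2 * physHermite (m+1) x + 2 * x * hermDeriv (m+1) x) x := by
      have := ((hasDerivAt_id x).const_mul (2:ℝ)).mul (ih2 x)
      simp only [id_eq] at this
      refine this.congr_deriv ?_
      ring
    have h2 := h1.sub ((ih1 x).const_mul (2*((m:ℝ)+1)))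
    have h3 : HasDerivAt (physHermite (m+2))
        (2 * physHermite (m+1) x + 2 * x * hermDeriv (m+1) x
          - 2*((m:ℝ)+1) * hermDeriv m x) x := by
      have heq : physHermite (m+2)
          = fun x : ℝ ↦ 2 * x * physHermite (m+1) x - 2*((m:ℝ)+1) * physHermite m x := by
        funext y
        simp [physHermite]
      rw [heq]
      exact h2
    convert h3 using 1
    have h := two_mul_physHermite m x
    rw [hermDeriv_succ, hermDeriv_succ]
    push_cast
    linear_combination (-(2*((m:ℝ)+1))) * h

lemma integrable_pow_physHermite_cexp (a : ℂ) (m : ℕ) :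
    ∀ j : ℕ, Integrable fun x : ℝ ↦
      (x:ℂ)^j * (physHermite m x : ℂ) * Complex.exp (-(x:ℂ)^2 + a*x) := by
  induction m using Nat.twoStepInduction with
  | zero =>
    intro j
    simpa [physHermite] using integrable_pow_mul_cexp j a
  | one =>
    intro j
    have h := (integrable_pow_mul_cexp (j+1) a).const_mul 2
    refine h.congr (Filter.Eventually.of_forall fun x ↦ ?_)
    simp [physHermite]
    ring
  | more m ih1 ih2 =>
    intro j
    have h := ((ih2 (j+1)).const_mul 2).sub ((ih1 j).const_mul (2*((m:ℝ)+1) : ℝ))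
    refine h.congr (Filter.Eventually.of_forall fun x ↦ ?_)
    simp only [Pi.sub_apply, physHermite]
    push_cast
    ring

lemma integrable_physHermite_cexp (a : ℂ) (m : ℕ) :
    Integrable fun x : ℝ ↦ (physHermite m x : ℂ) * Complex.exp (-(x:ℂ)^2 + a*x) := by
  simpa using integrable_pow_physHermite_cexp a m 0

lemma integrable_hermDeriv_cexp (a : ℂ) (m : ℕ) :
    Integrable fun x : ℝ ↦ (hermDeriv m x : ℂ) * Complex.exp (-(x:ℂ)^2 + a*x) := by
  cases m with
  | zero => simpa [hermDeriv] using (integrable_zero ℝ ℂ (volume : MeasureTheory.Measure ℝ))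
  | succ m =>
    have h := (integrable_physHermite_cexp a m).const_mul (2*((m:ℝ)+1) : ℂ)
    refine h.congr (Filter.Eventually.of_forall fun x ↦ ?_)
    simp only [hermDeriv_succ]
    push_cast
    ring

lemma herm_step (a : ℂ) (m : ℕ) :
    ∫ x : ℝ, (physHermite (m+1) x : ℂ) * Complex.exp (-(x:ℂ)^2 + a*x)
      = a * ∫ x : ℝ, (physHermite m x : ℂ) * Complex.exp (-(x:ℂ)^2 + a*x) := by
  set E : ℝ → ℂ := fun x ↦ Complex.exp (-(x:ℂ)^2 + a*x) with hE
  have hI0 : Integrable fun x : ℝ ↦ (physHermite m x : ℂ) * E x :=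
    integrable_physHermite_cexp a m
  have hI1 : Integrable fun x : ℝ ↦ (physHermite (m+1) x : ℂ) * E x :=
    integrable_physHermite_cexp a (m+1)
  have hX : Integrable fun x : ℝ ↦ (x:ℂ) * ((physHermite m x : ℂ) * E x) := by
    have h := integrable_pow_physHermite_cexp a m 1
    refine h.congr (Filter.Eventually.of_forall fun x ↦ ?_)
    simp [hE]
    ring
  have hD : Integrable fun x : ℝ ↦ (hermDeriv m x : ℂ) * E x :=
    integrable_hermDeriv_cexp a m
  have hderiv : ∀ x : ℝ, HasDerivAt (fun x : ℝ ↦ (physHermite m x : ℂ) * E x)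
      ((hermDeriv m x : ℂ) * E x + (physHermite m x : ℂ) * ((a - 2*x) * E x)) x := by
    intro x
    have h1 : HasDerivAt (fun x : ℝ ↦ ((physHermite m x : ℝ) : ℂ)) ((hermDeriv m x : ℂ)) x :=
      (hasDerivAt_physHermite m x).ofReal_comp
    have h2 : HasDerivAt (fun z : ℂ ↦ Complex.exp (-z^2 + a*z)) ((a - 2*x) * E x) (x:ℂ) := by
      have hz : HasDerivAt (fun z : ℂ ↦ -z^2 + a*z) (a - 2*(x:ℂ)) (x:ℂ) := by
        have h := ((hasDerivAt_pow 2 (x:ℂ)).neg.add ((hasDerivAt_id (x:ℂ)).const_mul a))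
        refine h.congr_deriv ?_
        simp
        ring
      have := hz.cexp
      refine this.congr_deriv ?_
      rw [hE]
      ring
    exact h1.mul (h2.comp_ofReal)
  have hf' : Integrable fun x : ℝ ↦
      (hermDeriv m x : ℂ) * E x + (physHermite m x : ℂ) * ((a - 2*x) * E x) := by
    have h := hD.add ((hI0.const_mul a).sub (hX.const_mul 2))
    refine h.congr (Filter.Eventually.of_forall fun x ↦ ?_)
    simp only [Pi.add_apply, Pi.sub_apply]
    ring
  have key : (∫ x : ℝ, ((hermDeriv m x : ℂ) * E x
      + (physHermite m x : ℂ) * ((a - 2*x) * E x))) = 0 :=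
    MeasureTheory.integral_eq_zero_of_hasDerivAt_of_integrable hderiv hf' hI0
  have hfun : ∀ x : ℝ, (hermDeriv m x : ℂ) * E x + (physHermite m x : ℂ) * ((a - 2*x) * E x)
      = a * ((physHermite m x : ℂ) * E x) - (physHermite (m+1) x : ℂ) * E x := by
    intro x
    have h := two_mul_physHermite m x
    have h' : ((2*x*physHermite m x : ℝ) : ℂ)
        = ((physHermite (m+1) x + hermDeriv m x : ℝ) : ℂ) := by rw [h]
    push_cast at h'
    linear_combination (-(E x)) * h'
  simp_rw [hfun] at key
  rw [MeasureTheory.integral_sub (hI0.const_mul a) hI1, MeasureTheory.integral_const_mul] at key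
  linear_combination -key

lemma herm_integral (a : ℂ) (m : ℕ) :
    ∫ x : ℝ, (physHermite m x : ℂ) * Complex.exp (-(x:ℂ)^2 + a*x)
      = a^m * ((Real.sqrt π : ℂ) * Complex.exp (a^2/4)) := by
  induction m with
  | zero =>
    have h := integral_cexp_quadratic (b := -1) (by simp) a 0
    simp only [physHermite, Complex.ofReal_one, one_mul, pow_zero]
    have heq : ∀ x : ℝ, Complex.exp (-(x:ℂ)^2 + a*x)
        = Complex.exp ((-1:ℂ)*(x:ℂ)^2 + a*(x:ℂ) + 0) := by
      intro x; congr 1; ring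
    simp_rw [heq]
    rw [h]
    have h2 : ((π:ℂ) / - -1) ^ ((1:ℂ) / 2) = ((Real.sqrt π : ℝ) : ℂ) := by
      rw [Real.sqrt_eq_rpow]
      rw [Complex.ofReal_cpow Real.pi_pos.le]
      norm_num
    rw [h2]
    congr 1
    ring
  | succ m ih =>
    rw [herm_step, ih]
    ring

/-- The Hermite DSC kernel of order `n` with Gaussian parameter `σ`. -/
noncomputable def hermiteDSCKernel (σ : ℝ) (n : ℕ) (x : ℝ) : ℝ :=
  (1 / (σ * Real.sqrt (2 * π))) * Real.exp (-x ^ 2 / (2 * σ ^ 2)) *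
    ∑ k ∈ Finset.range (n + 1),
      (-(1 / 4) : ℝ) ^ k * (1 / (k.factorial : ℝ))
        * physHermite (2 * k) (x / (Real.sqrt 2 * σ))

/-- Frequency response of the Hermite DSC kernel: its Fourier transform is the
degree-`n` Taylor partial sum of `exp(σ²ω²/2)` times the Gaussian
`exp(-σ²ω²/2)`. -/
theorem hermiteDSCKernel_fourier (σ : ℝ) (hσ : 0 < σ) (n : ℕ) (ω : ℝ) :
    ∫ x : ℝ, (hermiteDSCKernel σ n x : ℂ) * Complex.exp (-Complex.I * ω * x)
      = ((Real.exp (-(σ ^ 2 * ω ^ 2) / 2)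
          * ∑ k ∈ Finset.range (n + 1),
              (σ ^ 2 * ω ^ 2 / 2) ^ k / (k.factorial : ℝ) : ℝ) : ℂ) := by
  have hs2 : (0:ℝ) < Real.sqrt 2 := by positivity
  have hsπ : (0:ℝ) < Real.sqrt π := Real.sqrt_pos.mpr Real.pi_pos
  set c : ℝ := Real.sqrt 2 * σ with hcdef
  have hc0 : 0 < c := by positivity
  set a : ℂ := -Complex.I * ω * c with hadef
  set F : ℝ → ℂ := fun x ↦ (hermiteDSCKernel σ n x : ℂ) * Complex.exp (-Complex.I * ω * x)
    with hF
  have key : ∀ u : ℝ, F (c*u) = ((1 / (σ * Real.sqrt (2*π)) : ℝ) : ℂ) *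
      ∑ k ∈ Finset.range (n+1),
        (((-(1/4):ℝ)^k * (1/(k.factorial:ℝ)) : ℝ) : ℂ) *
          ((physHermite (2*k) u : ℂ) * Complex.exp (-(u:ℂ)^2 + a*u)) := by
    intro u
    have h1 : c*u / (Real.sqrt 2 * σ) = u := by
      rw [← hcdef, mul_div_cancel_left₀ _ hc0.ne']
    have hcsq : c^2 = 2*σ^2 := by
      rw [hcdef, mul_pow, Real.sq_sqrt (by norm_num : (0:ℝ) ≤ 2)]
    have h2 : Real.exp (-(c*u)^2 / (2*σ^2)) = Real.exp (-u^2) := by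
      congr 1
      rw [mul_pow, hcsq]
      field_simp
    have hexp : (Real.exp (-u^2) : ℂ) * Complex.exp (-Complex.I*ω*(c*u))
        = Complex.exp (-(u:ℂ)^2 + a*u) := by
      rw [Complex.ofReal_exp, ← Complex.exp_add]
      congr 1
      rw [hadef]
      push_cast
      ring
    simp only [hF, hermiteDSCKernel, h1, h2]
    push_cast
    rw [← hexp]
    rw [Finset.mul_sum, Finset.mul_sum, Finset.sum_mul]
    refine Finset.sum_congr rfl fun k _ ↦ ?_
    push_cast
    ring
  have hint : ∀ k ∈ Finset.range (n+1), Integrable fun u : ℝ ↦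
      (((-(1/4):ℝ)^k * (1/(k.factorial:ℝ)) : ℝ) : ℂ) *
        ((physHermite (2*k) u : ℂ) * Complex.exp (-(u:ℂ)^2 + a*u)) :=
    fun k _ ↦ (integrable_physHermite_cexp a (2*k)).const_mul _
  have step1 : (∫ x : ℝ, F x) = c • ∫ u : ℝ, F (c*u) := by
    rw [MeasureTheory.Measure.integral_comp_mul_left F c, smul_smul, abs_of_pos (inv_pos.mpr hc0),
      mul_inv_cancel₀ hc0.ne', one_smul]
  have step2 : (∫ u : ℝ, F (c*u)) = ((1 / (σ * Real.sqrt (2*π)) : ℝ) : ℂ) *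
      ∑ k ∈ Finset.range (n+1),
        (((-(1/4):ℝ)^k * (1/(k.factorial:ℝ)) : ℝ) : ℂ) *
          (a^(2*k) * ((Real.sqrt π : ℂ) * Complex.exp (a^2/4))) := by
    simp only [key]
    rw [MeasureTheory.integral_const_mul, MeasureTheory.integral_finset_sum _ hint]
    congr 1
    refine Finset.sum_congr rfl fun k _ ↦ ?_
    rw [MeasureTheory.integral_const_mul, herm_integral a (2*k)]
  have ha2 : a^2 = ((-(σ^2*ω^2)*2 : ℝ) : ℂ) := by
    have hcsqC : ((c:ℝ):ℂ)^2 = ((2*σ^2 : ℝ):ℂ) := by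
      have : c^2 = 2*σ^2 := by
        rw [hcdef, mul_pow, Real.sq_sqrt (by norm_num : (0:ℝ) ≤ 2)]
      exact_mod_cast this
    calc a^2 = Complex.I^2 * (ω:ℂ)^2 * ((c:ℝ):ℂ)^2 := by rw [hadef]; ring
      _ = ((-(σ^2*ω^2)*2 : ℝ) : ℂ) := by
          rw [Complex.I_sq, hcsqC]; push_cast; ring
  have hexp4 : Complex.exp (a^2/4) = ((Real.exp (-(σ^2*ω^2)/2) : ℝ) : ℂ) := by
    rw [ha2, Complex.ofReal_exp]
    congr 1
    push_cast
    ring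
  have hone : (c:ℂ) * ((1 / (σ * Real.sqrt (2*π)) : ℝ) : ℂ) * ((Real.sqrt π : ℝ) : ℂ) = 1 := by
    have hr : c * (1 / (σ * Real.sqrt (2*π))) * Real.sqrt π = 1 := by
      rw [hcdef, Real.sqrt_mul (by norm_num : (0:ℝ) ≤ 2) π]
      field_simp
    exact_mod_cast hr
  rw [hF] at step1
  rw [step1, step2, Complex.real_smul]
  simp_rw [pow_mul, hexp4, ha2]
  push_cast
  rw [Finset.mul_sum, Finset.mul_sum, Finset.mul_sum]
  push_cast at hone
  refine Finset.sum_congr rfl fun k _ ↦ ?_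
  have hpow : ((-(1/4) : ℂ))^k * ((-((σ:ℂ)^2*(ω:ℂ)^2)*2))^k = (((σ:ℂ)^2*(ω:ℂ)^2/2))^k := by
    rw [← mul_pow]
    congr 1
    ring
  push_cast
  rw [← hpow]
  linear_combination ((-(1/4) : ℂ))^k * ((-((σ:ℂ)^2*(ω:ℂ)^2)*2))^k / ((k.factorial : ℕ) : ℂ)
    * Complex.exp (-((σ:ℂ)^2*(ω:ℂ)^2)/2) * hone
end
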